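/- Assume a > 0 and c = 2/a − 1, and define K : (ℝᵐ \ {0}) × (ℝᵐ \ {0}) → ℂ by K(x,y) = (‖x‖ ‖y‖)^{−ab/2} exp( −(2i/a) ⟨x,y⟩ (‖x‖ ‖y‖)^{a/2−1} ), where ⟨x,y⟩ = Σ_j x_j y_j. Then for each fixed y ≠ 0, each j ∈ {1,…,m} and each x ≠ 0: ‖x‖^{1−a/2} ∂_{x_j} K(x,y) + b ‖x‖^{−a/2−1} x_j K(x,y) + (2/a − 1) ‖x‖^{−a/2−1} x_j Σ_{l=1}^m x_l ∂_{x_l} K(x,y) = −(2i/a) y_j ‖y‖^{a/2−1} K(x,y). (The kernel of the deformed Fourier transform satisfies the defining first-order system D_{j,x} K = −(2i/a) y_j r_y^{a/2−1} K in the scalar case c = 2/a − 1, k = 0.) -/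

import Mathlib

open Real

/-- `j`-th partial derivative of a complex-valued function on Euclidean space. -/
noncomputable def pdC {m : ℕ} (j : Fin m) (f : EuclideanSpace ℝ (Fin m) → ℂ)
    (x : EuclideanSpace ℝ (Fin m)) : ℂ :=
  fderiv ℝ f x (EuclideanSpace.single j 1)

/-- The kernel
`K(x,y) = (‖x‖‖y‖)^{-ab/2} exp(-(2i/a) ⟨x,y⟩ (‖x‖‖y‖)^{a/2-1})` of the deformed
Fourier transform (case `c = 2/a - 1`, `k = 0`). -/
noncomputable def Kker (m : ℕ) (a b : ℝ) (x y : EuclideanSpace ℝ (Fin m)) : ℂ :=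
  (((‖x‖ * ‖y‖) ^ (-(a * b) / 2) : ℝ) : ℂ)
    * Complex.exp (-(2 * Complex.I / (a : ℂ)) * ((∑ j, x j * y j : ℝ) : ℂ)
        * (((‖x‖ * ‖y‖) ^ (a / 2 - 1) : ℝ) : ℂ))

section aux

variable {m : ℕ}

/-- Derivative of the norm on Euclidean space away from the origin. -/
lemma norm_hasFDerivAt {x : EuclideanSpace ℝ (Fin m)} (hx : x ≠ 0) :
    HasFDerivAt (fun z : EuclideanSpace ℝ (Fin m) => ‖z‖)
      ((‖x‖⁻¹ : ℝ) • innerSL ℝ x) x := by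
  have hnx : (0 : ℝ) < ‖x‖ := norm_pos_iff.mpr hx
  have h1 : HasFDerivAt (fun z : EuclideanSpace ℝ (Fin m) => ‖z‖ ^ 2)
      ((2 : ℕ) • innerSL ℝ x) x := (hasStrictFDerivAt_norm_sq x).hasFDerivAt
  have h2 : HasDerivAt Real.sqrt (1 / (2 * Real.sqrt (‖x‖ ^ 2))) (‖x‖ ^ 2) :=
    Real.hasDerivAt_sqrt (by positivity)
  have h3 := h2.comp_hasFDerivAt x h1
  have hfun : Real.sqrt ∘ (fun z : EuclideanSpace ℝ (Fin m) => ‖z‖ ^ 2)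
      = fun z : EuclideanSpace ℝ (Fin m) => ‖z‖ := by
    funext z; simp [Function.comp, Real.sqrt_sq (norm_nonneg z)]
  rw [hfun] at h3
  refine h3.congr_fderiv ?_
  rw [Real.sqrt_sq hnx.le]
  rw [← Nat.cast_smul_eq_nsmul ℝ, smul_smul]
  norm_num
  rw [show ‖x‖⁻¹ * (1 / 2) * 2 = ‖x‖⁻¹ by ring]

set_option maxHeartbeats 2000000 in
/-- Formula for the partial derivatives of the kernel. -/
lemma pdC_Kker (a b : ℝ) (ha : 0 < a) {y x : EuclideanSpace ℝ (Fin m)}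
    (hy : y ≠ 0) (hx : x ≠ 0) (l : Fin m) :
    pdC l (fun z => Kker m a b z y) x
      = Kker m a b x y *
          (((((-(a * b) / 2) / ‖x‖ ^ 2 : ℝ) : ℂ)
              + (-(2 * Complex.I / (a : ℂ)))
                * ((((inner ℝ x y : ℝ)) * (a / 2 - 1) * (‖x‖ * ‖y‖) ^ (a / 2 - 1)
                    / ‖x‖ ^ 2 : ℝ) : ℂ)) * ((x l : ℝ) : ℂ)
            + (-(2 * Complex.I / (a : ℂ))) * (((‖x‖ * ‖y‖) ^ (a / 2 - 1) : ℝ) : ℂ)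
                * ((y l : ℝ) : ℂ)) := by
  have hnx : (0 : ℝ) < ‖x‖ := norm_pos_iff.mpr hx
  have hny : (0 : ℝ) < ‖y‖ := norm_pos_iff.mpr hy
  have hR : (0 : ℝ) < ‖x‖ * ‖y‖ := mul_pos hnx hny
  set p : ℝ := -(a * b) / 2 with hp
  set q : ℝ := a / 2 - 1 with hq
  set C : ℂ := -(2 * Complex.I / (a : ℂ)) with hCdef
  set D : EuclideanSpace ℝ (Fin m) →L[ℝ] ℝ := (‖x‖⁻¹ : ℝ) • innerSL ℝ x with hDdef
  have N : HasFDerivAt (fun z : EuclideanSpace ℝ (Fin m) => ‖z‖) D x := norm_hasFDerivAt hx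
  have hg1 : HasDerivAt (fun r : ℝ => (r * ‖y‖) ^ p) (p * (‖x‖ * ‖y‖) ^ (p - 1) * ‖y‖) ‖x‖ := by
    have h := (Real.hasDerivAt_rpow_const (x := ‖x‖ * ‖y‖) (p := p) (Or.inl hR.ne')).comp ‖x‖
      ((hasDerivAt_id ‖x‖).mul_const ‖y‖)
    simpa [Function.comp_def, mul_assoc] using h
  have hg : HasFDerivAt (fun z : EuclideanSpace ℝ (Fin m) => (‖z‖ * ‖y‖) ^ p)
      ((p * (‖x‖ * ‖y‖) ^ (p - 1) * ‖y‖) • D) x := hg1.comp_hasFDerivAt x N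
  have hh1 : HasDerivAt (fun r : ℝ => (r * ‖y‖) ^ q) (q * (‖x‖ * ‖y‖) ^ (q - 1) * ‖y‖) ‖x‖ := by
    have h := (Real.hasDerivAt_rpow_const (x := ‖x‖ * ‖y‖) (p := q) (Or.inl hR.ne')).comp ‖x‖
      ((hasDerivAt_id ‖x‖).mul_const ‖y‖)
    simpa [Function.comp_def, mul_assoc] using h
  have hh : HasFDerivAt (fun z : EuclideanSpace ℝ (Fin m) => (‖z‖ * ‖y‖) ^ q)
      ((q * (‖x‖ * ‖y‖) ^ (q - 1) * ‖y‖) • D) x := hh1.comp_hasFDerivAt x N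
  have hs : HasFDerivAt (fun z : EuclideanSpace ℝ (Fin m) => (inner ℝ z y : ℝ))
      (innerSL ℝ y) x := by
    have h := (innerSL ℝ y).hasFDerivAt (x := x)
    exact h.congr_of_eventuallyEq
      (Filter.Eventually.of_forall fun z => by simp [real_inner_comm z y])
  have hu := hs.mul hh
  have huC := (Complex.ofRealCLM.hasFDerivAt).comp x hu
  have heArg := huC.const_mul C
  have hexp := heArg.cexp
  have hgC := (Complex.ofRealCLM.hasFDerivAt).comp x hg
  have hK := hgC.mul hexp
  have hfun : (fun z => Kker m a b z y)
      = (fun z : EuclideanSpace ℝ (Fin m) =>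
          (((‖z‖ * ‖y‖) ^ p : ℝ) : ℂ)
            * Complex.exp (C * (((inner ℝ z y : ℝ) * (‖z‖ * ‖y‖) ^ q : ℝ) : ℂ))) := by
    funext z
    rw [real_inner_comm]
    simp only [Kker, PiLp.inner_apply, RCLike.inner_apply, conj_trivial, Complex.ofReal_mul]
    rw [hp, hq, hCdef]
    ring_nf
  simp only [Function.comp_def, Complex.ofRealCLM_apply, Pi.mul_def] at hK
  rw [pdC, hfun]
  rw [hK.fderiv]
  simp only [ContinuousLinearMap.add_apply, ContinuousLinearMap.smul_apply,
    ContinuousLinearMap.comp_apply, Complex.ofRealCLM_apply, innerSL_apply_apply,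
    EuclideanSpace.inner_single_right, conj_trivial, smul_eq_mul, Complex.real_smul, mul_one,
    hDdef]
  have r1 : q * (‖x‖ * ‖y‖) ^ (q - 1) * ‖y‖ * (‖x‖⁻¹ * (1 * x l))
      = q * (‖x‖ * ‖y‖) ^ q / ‖x‖ ^ 2 * x l := by
    rw [Real.rpow_sub hR, Real.rpow_one]
    field_simp
  have r2 : p * (‖x‖ * ‖y‖) ^ (p - 1) * ‖y‖ * (‖x‖⁻¹ * (1 * x l))
      = (‖x‖ * ‖y‖) ^ p * (p / ‖x‖ ^ 2 * x l) := by
    rw [Real.rpow_sub hR, Real.rpow_one]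
    field_simp
  rw [r1, r2]
  have hKxy : Kker m a b x y
      = (((‖x‖ * ‖y‖) ^ p : ℝ) : ℂ)
          * Complex.exp (C * (((inner ℝ x y : ℝ) * (‖x‖ * ‖y‖) ^ q : ℝ) : ℂ)) := congrFun hfun x
  rw [hKxy]
  push_cast
  ring

end aux

set_option maxHeartbeats 2000000 in
theorem stmt_14 (m : ℕ) (hm : 1 ≤ m) (a b : ℝ) (ha : 0 < a)
    (y : EuclideanSpace ℝ (Fin m)) (hy : y ≠ 0)
    (j : Fin m) (x : EuclideanSpace ℝ (Fin m)) (hx : x ≠ 0) :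
    ((‖x‖ ^ (1 - a / 2) : ℝ) : ℂ) * pdC j (fun z => Kker m a b z y) x
      + ((b * ‖x‖ ^ (-(a / 2) - 1) * x j : ℝ) : ℂ) * Kker m a b x y
      + (((2 / a - 1) * ‖x‖ ^ (-(a / 2) - 1) * x j : ℝ) : ℂ)
          * ∑ l, ((x l : ℝ) : ℂ) * pdC l (fun z => Kker m a b z y) x
      = -(2 * Complex.I / (a : ℂ)) * ((y j * ‖y‖ ^ (a / 2 - 1) : ℝ) : ℂ)
          * Kker m a b x y := by
  have hnx : (0 : ℝ) < ‖x‖ := norm_pos_iff.mpr hx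
  have hny : (0 : ℝ) < ‖y‖ := norm_pos_iff.mpr hy
  have hpd := pdC_Kker a b ha hy hx
  have h2 : ((‖x‖ ^ 2 : ℝ) : ℂ) = ∑ l, ((x l : ℝ) : ℂ) * ((x l : ℝ) : ℂ) := by
    have hr : (‖x‖ ^ 2 : ℝ) = ∑ l, x l * x l := by
      rw [← real_inner_self_eq_norm_sq]
      simp only [PiLp.inner_apply, RCLike.inner_apply, conj_trivial]
    rw [hr]
    push_cast
    rfl
  have h3 : (((inner ℝ x y : ℝ)) : ℂ) = ∑ l, ((x l : ℝ) : ℂ) * ((y l : ℝ) : ℂ) := by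
    have hr : (inner ℝ x y : ℝ) = ∑ l, x l * y l := by
      simp [PiLp.inner_apply, RCLike.inner_apply]
      exact Finset.sum_congr rfl fun _ _ => mul_comm _ _
    rw [hr]
    push_cast
    rfl
  have hsum : ∑ l, ((x l : ℝ) : ℂ) * pdC l (fun z => Kker m a b z y) x
      = Kker m a b x y *
          (((((-(a * b) / 2) / ‖x‖ ^ 2 : ℝ) : ℂ)
              + (-(2 * Complex.I / (a : ℂ)))
                * ((((inner ℝ x y : ℝ)) * (a / 2 - 1) * (‖x‖ * ‖y‖) ^ (a / 2 - 1)
                    / ‖x‖ ^ 2 : ℝ) : ℂ)) * ((‖x‖ ^ 2 : ℝ) : ℂ)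
            + (-(2 * Complex.I / (a : ℂ))) * (((‖x‖ * ‖y‖) ^ (a / 2 - 1) : ℝ) : ℂ)
                * (((inner ℝ x y : ℝ)) : ℂ)) := by
    simp only [hpd]
    rw [h2, h3]
    simp only [mul_add, Finset.mul_sum, ← Finset.sum_add_distrib]
    exact Finset.sum_congr rfl fun l _ => by ring
  rw [hpd j, hsum]
  have f3 : (‖x‖ : ℝ) ^ ((1 : ℝ) - a / 2) = ‖x‖ ^ (-(a / 2) - 1) * ‖x‖ ^ 2 := by
    rw [← Real.rpow_natCast ‖x‖ 2, ← Real.rpow_add hnx]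
    norm_num
    congr 1
    ring
  have f2 : (‖y‖ : ℝ) ^ (a / 2 - 1)
      = ‖x‖ ^ (-(a / 2) - 1) * ‖x‖ ^ 2 * (‖x‖ * ‖y‖) ^ (a / 2 - 1) := by
    rw [← f3, Real.mul_rpow hnx.le hny.le, ← mul_assoc, ← Real.rpow_add hnx]
    norm_num
  have g1 : ((‖x‖ ^ ((1 : ℝ) - a / 2) : ℝ) : ℂ)
      = ((‖x‖ ^ (-(a / 2) - 1) : ℝ) : ℂ) * ((‖x‖ : ℝ) : ℂ) ^ 2 := by
    rw [f3]; push_cast; ring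
  have g2 : ((‖y‖ ^ (a / 2 - 1) : ℝ) : ℂ)
      = ((‖x‖ ^ (-(a / 2) - 1) : ℝ) : ℂ) * ((‖x‖ : ℝ) : ℂ) ^ 2
          * (((‖x‖ * ‖y‖) ^ (a / 2 - 1) : ℝ) : ℂ) := by
    rw [f2]; push_cast; ring
  have hca : ((a : ℝ) : ℂ) ≠ 0 := Complex.ofReal_ne_zero.mpr ha.ne'
  have hcx : ((‖x‖ : ℝ) : ℂ) ≠ 0 := Complex.ofReal_ne_zero.mpr hnx.ne'
  push_cast
  rw [g1, g2]
  field_simp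
  ring_nf
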